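/- Let n ≥ 2 and p ≥ 1 be integers and let W be a p×p real symmetric positive semidefinite matrix with tr W > 0. For c > 0 define V(c) = (W + α̂(c) I_p)⁻¹, â_S(c) = ((n − p − 1)·tr V(c) + α̂(c)·(tr V(c))²)/tr(V(c)² W) − (2c₀(c) + 1), and b̂_S(c) = ((n−1)p − 2) − tr(V(c) W)·â_S(c), where either α̂(c) = c with c₀(c) = 0, or α̂(c) = c·tr W with c₀(c) = c. Then lim_{c → ∞} b̂_S(c) = −2 in the case α̂(c) = c, and lim_{c → ∞} b̂_S(c) = 0 in the case α̂(c) = c·tr W. -/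
import Mathlib


open Matrix Filter

/-- `V = (W + α I_p)⁻¹`. -/
noncomputable def Vr (p : ℕ) (W : Matrix (Fin p) (Fin p) ℝ) (α : ℝ) :
    Matrix (Fin p) (Fin p) ℝ :=
  (W + α • 1)⁻¹

/-- The SURE-minimizing weight `â_S` as a function of `W`, the ridge value `α` and `c₀`. -/
noncomputable def aSv (n p : ℕ) (W : Matrix (Fin p) (Fin p) ℝ) (α c0 : ℝ) : ℝ :=
  (((n : ℝ) - p - 1) * (Vr p W α).trace + α * ((Vr p W α).trace) ^ 2) /
      (Vr p W α * Vr p W α * W).trace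
    - (2 * c0 + 1)

/-- The SURE-minimizing second weight `b̂_S`. -/
noncomputable def bSv (n p : ℕ) (W : Matrix (Fin p) (Fin p) ℝ) (α c0 : ℝ) : ℝ :=
  (((n : ℝ) - 1) * p - 2) - (Vr p W α * W).trace * aSv n p W α c0

lemma posDef_add_smul {p : ℕ} {W : Matrix (Fin p) (Fin p) ℝ} (hW : W.PosSemidef)
    {α : ℝ} (hα : 0 < α) : (W + α • (1 : Matrix (Fin p) (Fin p) ℝ)).PosDef := by
  refine Matrix.PosDef.posSemidef_add hW ?_
  rw [Matrix.smul_one_eq_diagonal]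
  exact Matrix.posDef_diagonal_iff.mpr fun _ => hα

lemma smul_Vr_eq {p : ℕ} {W : Matrix (Fin p) (Fin p) ℝ} (hW : W.PosSemidef)
    {α : ℝ} (hα : 0 < α) :
    α • Vr p W α = (α⁻¹ • W + 1)⁻¹ := by
  have hpd := posDef_add_smul hW hα
  have hdet : IsUnit (W + α • (1 : Matrix (Fin p) (Fin p) ℝ)).det := hpd.det_pos.ne'.isUnit
  symm
  apply Matrix.inv_eq_right_inv
  have h1 : α⁻¹ • W + 1 = α⁻¹ • (W + α • (1 : Matrix (Fin p) (Fin p) ℝ)) := by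
    rw [smul_add, smul_smul, inv_mul_cancel₀ hα.ne', one_smul]
  rw [h1, Vr, Matrix.smul_mul, Matrix.mul_smul, smul_smul, inv_mul_cancel₀ hα.ne',
    Matrix.mul_nonsing_inv _ hdet, one_smul]

lemma tendsto_smul_Vr {p : ℕ} {W : Matrix (Fin p) (Fin p) ℝ} (hW : W.PosSemidef) :
    Tendsto (fun α : ℝ => α • Vr p W α) atTop (nhds 1) := by
  have h0 : Tendsto (fun α : ℝ => α⁻¹ • W + (1 : Matrix (Fin p) (Fin p) ℝ)) atTop
      (nhds 1) := by
    have := (tendsto_inv_atTop_zero (𝕜 := ℝ)).smul_const W |>.add_const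
      (1 : Matrix (Fin p) (Fin p) ℝ)
    simpa using this
  have hinv : Tendsto (fun M : Matrix (Fin p) (Fin p) ℝ => (M.det)⁻¹ • M.adjugate)
      (nhds 1) (nhds 1) := by
    have hd : Tendsto (fun M : Matrix (Fin p) (Fin p) ℝ => (M.det)⁻¹) (nhds 1)
        (nhds 1) := by
      have : Tendsto (fun M : Matrix (Fin p) (Fin p) ℝ => M.det) (nhds 1) (nhds 1) := by
        simpa using (continuous_id.matrix_det (R := ℝ) (n := Fin p)).tendsto 1
      simpa using this.inv₀ one_ne_zero
    have ha : Tendsto (fun M : Matrix (Fin p) (Fin p) ℝ => M.adjugate) (nhds 1)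
        (nhds 1) := by
      simpa using (continuous_id.matrix_adjugate (R := ℝ) (n := Fin p)).tendsto 1
    simpa using hd.smul ha
  have := hinv.comp h0
  refine this.congr' ?_
  filter_upwards [eventually_gt_atTop (0 : ℝ)] with α hα
  rw [Function.comp_apply, smul_Vr_eq hW hα, Matrix.inv_def,
    Ring.inverse_eq_inv']

/-- As c → ∞, b̂_S(c) → −2 in the case α̂ = c, and b̂_S(c) → 0 in the case α̂ = c·tr W. -/
theorem bS_tendsto_atTop (n p : ℕ) (hn : 2 ≤ n) (hp : 1 ≤ p)
    (W : Matrix (Fin p) (Fin p) ℝ) (hW : W.PosSemidef) (htr : 0 < W.trace) :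
    Tendsto (fun c : ℝ => bSv n p W c 0) atTop (nhds (-2)) ∧
      Tendsto (fun c : ℝ => bSv n p W (c * W.trace) c) atTop (nhds 0) := by
  set S := W.trace with hS
  have hkey := tendsto_smul_Vr hW
  -- α * tr V → p
  have hT : Tendsto (fun α : ℝ => α * (Vr p W α).trace) atTop (nhds (p : ℝ)) := by
    have hc : Continuous (fun M : Matrix (Fin p) (Fin p) ℝ => M.trace) :=
      continuous_id.matrix_trace
    have := (hc.tendsto 1).comp hkey
    simpa [Function.comp_def, Matrix.trace_smul, smul_eq_mul, Matrix.trace_one] using this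
  -- α * tr (V W) → S
  have hT1a : Tendsto (fun α : ℝ => α * (Vr p W α * W).trace) atTop (nhds S) := by
    have hc : Continuous (fun M : Matrix (Fin p) (Fin p) ℝ => (M * W).trace) :=
      (continuous_id.matrix_mul continuous_const).matrix_trace
    have := (hc.tendsto 1).comp hkey
    simpa [Function.comp_def, Matrix.smul_mul, Matrix.trace_smul, smul_eq_mul] using this
  -- α^2 * tr (V V W) → S
  have hBa : Tendsto (fun α : ℝ => α ^ 2 * (Vr p W α * Vr p W α * W).trace) atTop
      (nhds S) := by
    have hc : Continuous (fun M : Matrix (Fin p) (Fin p) ℝ => (M * M * W).trace) :=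
      ((continuous_id.matrix_mul continuous_id).matrix_mul continuous_const).matrix_trace
    have := (hc.tendsto 1).comp hkey
    simpa [Function.comp_def, Matrix.smul_mul, Matrix.mul_smul, Matrix.trace_smul,
      smul_eq_mul, smul_smul, pow_two, mul_assoc] using this
  -- tr (V W) → 0
  have hT1z : Tendsto (fun α : ℝ => (Vr p W α * W).trace) atTop (nhds 0) := by
    have h := hT1a.mul (tendsto_inv_atTop_zero (𝕜 := ℝ))
    rw [mul_zero] at h
    refine h.congr' ?_
    filter_upwards [eventually_gt_atTop (0 : ℝ)] with α hα
    field_simp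
  -- the quotient term Q α = tr(VW) * (A/B) → (n-1) p
  have hQ : Tendsto (fun α : ℝ => (Vr p W α * W).trace *
      ((((n : ℝ) - p - 1) * (Vr p W α).trace + α * ((Vr p W α).trace) ^ 2) /
        (Vr p W α * Vr p W α * W).trace)) atTop (nhds (((n : ℝ) - 1) * p)) := by
    have hnum : Tendsto (fun α : ℝ => (α * (Vr p W α * W).trace) *
        (((n : ℝ) - p - 1) * (α * (Vr p W α).trace) + (α * (Vr p W α).trace) ^ 2))
        atTop (nhds (S * (((n : ℝ) - p - 1) * p + (p : ℝ) ^ 2))) :=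
      hT1a.mul ((tendsto_const_nhds.mul hT).add (hT.pow 2))
    have h := hnum.div hBa (ne_of_gt htr)
    rw [mul_div_assoc] at h
    have hval : S * ((((n : ℝ) - p - 1) * p + (p : ℝ) ^ 2) / S) = ((n : ℝ) - 1) * p := by
      rw [mul_comm, div_mul_cancel₀ _ (ne_of_gt htr)]
      ring
    rw [hval] at h
    refine h.congr' ?_
    filter_upwards [eventually_gt_atTop (0 : ℝ)] with α hα
    have hα2 : (α : ℝ) ^ 2 ≠ 0 := pow_ne_zero 2 hα.ne'
    set T := (Vr p W α).trace
    set T1 := (Vr p W α * W).trace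
    set B := (Vr p W α * Vr p W α * W).trace
    have heq : (α * T1) * (((n : ℝ) - p - 1) * (α * T) + (α * T) ^ 2)
        = α ^ 2 * (T1 * (((n : ℝ) - p - 1) * T + α * T ^ 2)) := by ring
    simp only [Pi.div_apply]
    rw [heq, mul_div_mul_left _ _ hα2, mul_div_assoc]
  constructor
  · -- case α = c, c0 = 0
    have h := (tendsto_const_nhds (x := ((n : ℝ) - 1) * p - 2)).sub hQ |>.add hT1z
    have hval : (((n : ℝ) - 1) * p - 2) - ((n : ℝ) - 1) * p + 0 = -2 := by ring
    rw [hval] at h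
    refine h.congr fun c => ?_
    simp only [bSv, aSv]
    ring
  · -- case α = c * S, c0 = c
    have hcomp : Tendsto (fun c : ℝ => c * S) atTop atTop :=
      Tendsto.atTop_mul_const htr tendsto_id
    have hQ2 := hQ.comp hcomp
    -- tr(VW)(cS) * (2c+1) → 2
    have hfrac : Tendsto (fun c : ℝ => (2 * c + 1) / (c * S)) atTop (nhds (2 / S)) := by
      have h := ((tendsto_const_nhds (x := (2 : ℝ))).add
        (tendsto_inv_atTop_zero (𝕜 := ℝ))).div_const S
      rw [add_zero] at h
      refine h.congr' ?_
      filter_upwards [eventually_gt_atTop (0 : ℝ)] with c hc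
      field_simp
    have hprod : Tendsto (fun c : ℝ => ((c * S) * (Vr p W (c * S) * W).trace) *
        ((2 * c + 1) / (c * S))) atTop (nhds (S * (2 / S))) :=
      (hT1a.comp hcomp).mul hfrac
    have hval2 : S * (2 / S) = 2 := by
      field_simp
    rw [hval2] at hprod
    have hsec : Tendsto (fun c : ℝ => (Vr p W (c * S) * W).trace * (2 * c + 1)) atTop
        (nhds 2) := by
      refine hprod.congr' ?_
      filter_upwards [eventually_gt_atTop (0 : ℝ)] with c hc
      have hcs : c * S ≠ 0 := (mul_pos hc htr).ne'
      field_simp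
    have h := (tendsto_const_nhds (x := ((n : ℝ) - 1) * p - 2)).sub hQ2 |>.add hsec
    have hval : (((n : ℝ) - 1) * p - 2) - ((n : ℝ) - 1) * p + 2 = 0 := by ring
    rw [hval] at h
    refine h.congr fun c => ?_
    simp only [bSv, aSv, Function.comp_apply]
    ring
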